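/- Let c₀ : [0,T] → ℝ be continuous with c₀ ≥ 0, let c : [0,T] → ℝ be C¹, let λ ≥ 0, and let u : [0,T] → ℝ solve u'' + λ² c₀(t) u = 0. Suppose c(t) ≥ ν > 0, |c'(t)| ≤ K₁, and |c(t) - c₀(t)| ≤ K₂ on [0,T]. Then with E(t) := |u'(t)|² + λ² c(t)|u(t)|², one has E(t) ≤ E(0)·exp( (K₁/ν + λK₂/√ν)·t ) for all t ∈ [0,T]. -/

import Mathlib

/-!
Differentiating `E = u'² + λ² c u²` along the equation `u'' = -λ² c₀ u` gives
`E' = λ² c' u² + 2 λ² (c - c₀) u u'`. The first term is at most `(K₁/ν) λ² c u²` because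
`c ≥ ν`, and the second at most `(λ K₂/√ν) E` by AM-GM applied to `2 (λ √ν |u|) |u'|`, so
`E' ≤ (K₁/ν + λ K₂/√ν) E` and Grönwall's inequality concludes.
-/

open Real Set

theorem le_mul_exp_of_hasDerivWithinAt_le {f f' : ℝ → ℝ} {K a b : ℝ}
    (hf : ContinuousOn f (Icc a b))
    (hf' : ∀ x ∈ Ico a b, HasDerivWithinAt f (f' x) (Ici x) x)
    (bound : ∀ x ∈ Ico a b, f' x ≤ K * f x) :
    ∀ x ∈ Icc a b, f x ≤ f a * exp (K * (x - a)) := by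
  intro x hx
  rw [← gronwallBound_ε0]
  exact le_gronwallBound_of_liminf_deriv_right_le hf
    (fun x hx _ hr => (hf' x hx).liminf_right_slope_le hr) le_rfl
    (fun x hx => by simpa using bound x hx) x hx

theorem hasDerivAt_energy {u v c : ℝ → ℝ} {c' μ q t : ℝ}
    (hu : HasDerivAt u (v t) t) (hv : HasDerivAt v (-(μ * q * u t)) t)
    (hc : HasDerivAt c c' t) :
    HasDerivAt (fun s => v s ^ 2 + μ * c s * u s ^ 2)
      (μ * c' * u t ^ 2 + 2 * μ * (c t - q) * u t * v t) t := by
  refine ((hv.fun_pow 2).fun_add ((hc.const_mul μ).fun_mul (hu.fun_pow 2))).congr_deriv ?_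
  push_cast
  ring

theorem mul_mul_sq_le_div_mul {ν K c c' μ x : ℝ} (hν : 0 < ν) (hc : ν ≤ c) (hc' : |c'| ≤ K)
    (hμ : 0 ≤ μ) : μ * c' * x ^ 2 ≤ K / ν * (μ * c * x ^ 2) := by
  have hK : c' ≤ K / ν * c := calc
    c' ≤ K := (abs_le.1 hc').2
    _ = K / ν * ν := (div_mul_cancel₀ K hν.ne').symm
    _ ≤ K / ν * c := by gcongr; exact div_nonneg ((abs_nonneg _).trans hc') hν.le
  calc μ * c' * x ^ 2 = μ * x ^ 2 * c' := by ring
    _ ≤ μ * x ^ 2 * (K / ν * c) := by gcongr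
    _ = K / ν * (μ * c * x ^ 2) := by ring

theorem two_mul_sq_mul_mul_le_div_mul {ν K c q l x y : ℝ} (hν : 0 < ν) (hc : ν ≤ c)
    (hcq : |c - q| ≤ K) (hl : 0 ≤ l) :
    2 * l ^ 2 * (c - q) * x * y ≤ l * K / √ν * (y ^ 2 + l ^ 2 * c * x ^ 2) := by
  set s := √ν
  have hs : 0 < s := sqrt_pos.2 hν
  have hK : 0 ≤ K := (abs_nonneg _).trans hcq
  have amgm : 2 * (l * s * |x|) * |y| ≤ y ^ 2 + l ^ 2 * c * x ^ 2 := by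
    calc 2 * (l * s * |x|) * |y| ≤ y ^ 2 + l ^ 2 * s ^ 2 * x ^ 2 := by
          simpa only [mul_pow, sq_abs, add_comm (y ^ 2)] using two_mul_le_add_sq (l * s * |x|) |y|
      _ = y ^ 2 + l ^ 2 * ν * x ^ 2 := by rw [sq_sqrt hν.le]
      _ ≤ y ^ 2 + l ^ 2 * c * x ^ 2 := by gcongr
  calc 2 * l ^ 2 * (c - q) * x * y ≤ |2 * l ^ 2 * (c - q) * x * y| := le_abs_self _
    _ = 2 * l ^ 2 * |c - q| * |x| * |y| := by
        simp only [abs_mul, abs_two, abs_pow, abs_of_nonneg hl]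
    _ ≤ 2 * l ^ 2 * K * |x| * |y| := by gcongr
    _ = l * K / s * (2 * (l * s * |x|) * |y|) := by field_simp
    _ ≤ l * K / s * (y ^ 2 + l ^ 2 * c * x ^ 2) := by gcongr

theorem energy_deriv_le {ν K₁ K₂ c c' q l x y : ℝ} (hν : 0 < ν) (hl : 0 ≤ l) (hc : ν ≤ c)
    (hc' : |c'| ≤ K₁) (hcq : |c - q| ≤ K₂) :
    l ^ 2 * c' * x ^ 2 + 2 * l ^ 2 * (c - q) * x * y
      ≤ (K₁ / ν + l * K₂ / √ν) * (y ^ 2 + l ^ 2 * c * x ^ 2) := by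
  have hK₁ : 0 ≤ K₁ / ν := div_nonneg ((abs_nonneg _).trans hc') hν.le
  linarith [mul_mul_sq_le_div_mul (x := x) hν hc hc' (sq_nonneg l),
    two_mul_sq_mul_mul_le_div_mul (x := x) (y := y) hν hc hcq hl, mul_nonneg hK₁ (sq_nonneg y)]

theorem stmt_12_general (T ν lamk K₁ K₂ : ℝ) (c c' c₀ u u' : ℝ → ℝ)
    (hν : 0 < ν) (hlam : 0 ≤ lamk)
    (hc : ∀ t, HasDerivAt c (c' t) t)
    (hclow : ∀ t ∈ Set.Icc (0:ℝ) T, ν ≤ c t)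
    (hc' : ∀ t ∈ Set.Icc (0:ℝ) T, |c' t| ≤ K₁)
    (hcc₀ : ∀ t ∈ Set.Icc (0:ℝ) T, |c t - c₀ t| ≤ K₂)
    (hu : ∀ t, HasDerivAt u (u' t) t)
    (hu' : ∀ t, HasDerivAt u' (-(lamk ^ 2 * c₀ t * u t)) t) :
    ∀ t ∈ Set.Icc (0:ℝ) T,
      (u' t) ^ 2 + lamk ^ 2 * c t * (u t) ^ 2 ≤
        ((u' 0) ^ 2 + lamk ^ 2 * c 0 * (u 0) ^ 2) *
          Real.exp ((K₁ / ν + lamk * K₂ / Real.sqrt ν) * t) := by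
  have hE := fun t => hasDerivAt_energy (hu t) (hu' t) (hc t)
  intro t ht
  simpa using le_mul_exp_of_hasDerivWithinAt_le
    (fun x _ => (hE x).continuousAt.continuousWithinAt)
    (fun x _ => (hE x).hasDerivWithinAt)
    (fun x hx => have hx := Ico_subset_Icc_self hx
      energy_deriv_le hν hlam (hclow x hx) (hc' x hx) (hcc₀ x hx)) t ht

theorem stmt_12 (T ν lamk K₁ K₂ : ℝ) (c c' c₀ u u' : ℝ → ℝ)
    (hT : 0 < T) (hν : 0 < ν) (hlam : 0 ≤ lamk)
    (hc₀ : Continuous c₀)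
    (hc₀nonneg : ∀ t ∈ Set.Icc (0:ℝ) T, 0 ≤ c₀ t)
    (hc : ∀ t, HasDerivAt c (c' t) t)
    (hclow : ∀ t ∈ Set.Icc (0:ℝ) T, ν ≤ c t)
    (hc' : ∀ t ∈ Set.Icc (0:ℝ) T, |c' t| ≤ K₁)
    (hcc₀ : ∀ t ∈ Set.Icc (0:ℝ) T, |c t - c₀ t| ≤ K₂)
    (hu : ∀ t, HasDerivAt u (u' t) t)
    (hu' : ∀ t, HasDerivAt u' (-(lamk ^ 2 * c₀ t * u t)) t) :
    ∀ t ∈ Set.Icc (0:ℝ) T,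
      (u' t) ^ 2 + lamk ^ 2 * c t * (u t) ^ 2 ≤
        ((u' 0) ^ 2 + lamk ^ 2 * c 0 * (u 0) ^ 2) *
          Real.exp ((K₁ / ν + lamk * K₂ / Real.sqrt ν) * t) :=
  stmt_12_general T ν lamk K₁ K₂ c c' c₀ u u' hν hlam hc hclow hc' hcc₀ hu hu'
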